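/- arXiv:math/0212250 — 2 statements merged into one kernel-verified Lean document; each statement's English description precedes it below -/
import Mathlib

section
/- Let G be a group equipped with a metric d such that (G,d) is a complete metric space and the maps (x,y) ↦ x·y and x ↦ x⁻¹ are continuous for the topology induced by d. If the density of (G,d) is strictly less than the cardinality of G, then G is not a free group. -/
/-!
If `G ≅ F(X)` is free then `#X = #G > #s`. Each element has nonzero exponent sum in only
finitely many generators, so for some generator `τ` the exponent sum `ψ : G → ℤ` of `τ` vanishes
on the dense set `s`. Hence every fibre of `ψ`, in particular `ψ⁻¹(1)`, is dense.

This is impossible in a complete metric group (Dudley): choosing `x n ∈ ψ⁻¹(1)` inductively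
close enough to `1`, the infinite nested products
`w k = x k * (x (k + 1) * (x (k + 2) * ⋯) ^ (k + 2)) ^ (k + 1)` converge and satisfy
`w k = x k * w (k + 1) ^ (k + 1)`. The integers `a k = ψ (w k)` then satisfy
`a k = 1 + (k + 1) * a (k + 1)`, which forces `|a (k + 1)|` to be non-increasing and at least
`k + 1`.
-/

open Filter Topology Cardinal

theorem Int.not_forall_eq_one_add_succ_mul (a : ℕ → ℤ) :
    ¬ ∀ k : ℕ, a k = 1 + (k + 1) * a (k + 1) := by
  intro ha
  have hne : ∀ k, a (k + 1) ≠ 0 := by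
    intro k h0
    have hdvd : ((k : ℤ) + 2) ∣ 1 :=
      ⟨-a (k + 2), by have := ha (k + 1); push_cast at this; linarith⟩
    have := Int.le_of_dvd one_pos hdvd
    omega
  have hrec : ∀ k : ℕ, ((k : ℤ) + 1) * |a (k + 1)| - 1 ≤ |a k| := by
    intro k
    rw [ha k]
    cases abs_cases (a (k + 1)) <;> cases abs_cases (1 + ((k : ℤ) + 1) * a (k + 1)) <;> nlinarith
  have hpos : ∀ k, 1 ≤ |a (k + 1)| := fun k => Int.one_le_abs (hne k)
  have hanti : Antitone fun k => |a (k + 1)| := antitone_nat_of_succ_le fun k => by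
    have := hrec (k + 1); have := hpos (k + 1); push_cast at *; nlinarith
  have hlarge : ∀ k : ℕ, (k : ℤ) + 1 ≤ |a (k + 1)| := fun k => by
    have := hrec (k + 1); have := hpos (k + 1); push_cast at *; nlinarith
  have : ((|a 1|).toNat : ℤ) + 1 ≤ |a 1| := (hlarge _).trans (hanti (Nat.zero_le _))
  omega

section NestedPow

variable {G : Type*} [Monoid G]

def nestedPow (x : ℕ → G) : ℕ → ℕ → G → G
  | _, 0, u => u
  | k, n + 1, u => x k * nestedPow x (k + 1) n u ^ (k + 1)

theorem nestedPow_succ_one (x : ℕ → G) (k n : ℕ) :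
    nestedPow x k (n + 1) 1 = nestedPow x k n (x (k + n)) := by
  induction n generalizing k with
  | zero => simp [nestedPow]
  | succ n ih => rw [nestedPow, ih, nestedPow, Nat.add_right_comm, Nat.add_assoc]

theorem nestedPow_congr {x y : ℕ → G} {k n : ℕ} (h : Set.EqOn x y (Set.Ico k (k + n))) (u : G) :
    nestedPow x k n u = nestedPow y k n u := by
  induction n generalizing k with
  | zero => rfl
  | succ n ih =>
    have htail : Set.Ico (k + 1) (k + 1 + n) ⊆ Set.Ico k (k + (n + 1)) :=
      Set.Ico_subset_Ico (Nat.le_succ k) (by omega)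
    rw [nestedPow, nestedPow, h ⟨le_rfl, by omega⟩, ih (h.mono htail)]

theorem continuous_nestedPow [TopologicalSpace G] [ContinuousMul G] (x : ℕ → G) (k n : ℕ) :
    Continuous (nestedPow x k n) := by
  induction n generalizing k with
  | zero => exact continuous_id
  | succ n ih => exact continuous_const.mul ((ih (k + 1)).pow (k + 1))

end NestedPow

section Dudley

variable {G : Type*} [Monoid G] [MetricSpace G] [ContinuousMul G] {S : Set G}

theorem exists_mem_forall_dist_nestedPow_lt (hS : (1 : G) ∈ closure S) (x : ℕ → G) (N : ℕ)
    {ε : ℝ} (hε : 0 < ε) :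
    ∃ u ∈ S, ∀ k ≤ N, dist (nestedPow x k (N - k) u) (nestedPow x k (N - k) 1) < ε := by
  have hnear : ∀ᶠ u in 𝓝 1, ∀ k ≤ N,
      dist (nestedPow x k (N - k) u) (nestedPow x k (N - k) 1) < ε :=
    (Set.finite_le_nat N).eventually_all.2 fun k _ =>
      ((continuous_nestedPow x k (N - k)).tendsto 1).eventually (Metric.ball_mem_nhds _ hε)
  obtain ⟨u, hu, huS⟩ := (hnear.and_frequently (mem_closure_iff_frequently.1 hS)).exists
  exact ⟨u, huS, hu⟩

/- The term of index `N` is chosen from the earlier ones only; the padding by `1` at indices `≥ N` is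
never read, since `nestedPow x k (N - k)` only involves `x k, …, x (N - 1)`. -/
noncomputable def dudleySeq (hS : (1 : G) ∈ closure S) : ℕ → G
  | N => (exists_mem_forall_dist_nestedPow_lt hS
      (fun m => if _ : m < N then dudleySeq hS m else 1) N
      (by positivity : (0 : ℝ) < (1 / 2) ^ N)).choose

theorem dudleySeq_spec (hS : (1 : G) ∈ closure S) (N : ℕ) :
    dudleySeq hS N ∈ S ∧ ∀ k ≤ N,
      dist (nestedPow (fun m => if _ : m < N then dudleySeq hS m else 1) k (N - k)
          (dudleySeq hS N))
        (nestedPow (fun m => if _ : m < N then dudleySeq hS m else 1) k (N - k) 1) <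
        (1 / 2) ^ N := by
  rw [dudleySeq]
  exact (exists_mem_forall_dist_nestedPow_lt hS _ N (by positivity)).choose_spec

theorem dist_nestedPow_dudleySeq_lt (hS : (1 : G) ∈ closure S) (k n : ℕ) :
    dist (nestedPow (dudleySeq hS) k n 1) (nestedPow (dudleySeq hS) k (n + 1) 1) <
      (1 / 2) ^ n := by
  have hprefix := (dudleySeq_spec hS (k + n)).2 k (Nat.le_add_right k n)
  have hagree : Set.EqOn (fun m => if _ : m < k + n then dudleySeq hS m else 1) (dudleySeq hS)
      (Set.Ico k (k + n)) := fun i hi => dif_pos hi.2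
  simp only [Nat.add_sub_cancel_left, nestedPow_congr hagree] at hprefix
  rw [nestedPow_succ_one, dist_comm]
  exact hprefix.trans_le (pow_le_pow_of_le_one (by norm_num) (by norm_num) (Nat.le_add_left n k))

theorem one_notMem_closure_preimage_ofAdd_one [CompleteSpace G] (ψ : G →* Multiplicative ℤ) :
    (1 : G) ∉ closure (ψ ⁻¹' {Multiplicative.ofAdd 1}) := by
  intro hS
  set x := dudleySeq hS
  choose w hw using fun k => cauchySeq_tendsto_of_complete <|
    cauchySeq_of_le_geometric (1 / 2) 1 (by norm_num) fun n => by
      simpa using (dist_nestedPow_dudleySeq_lt hS k n).le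
  have hrec : ∀ k, w k = x k * w (k + 1) ^ (k + 1) := fun k =>
    tendsto_nhds_unique ((hw k).comp (tendsto_add_atTop_nat 1))
      (tendsto_const_nhds.mul ((hw (k + 1)).pow (k + 1)))
  refine Int.not_forall_eq_one_add_succ_mul (fun k => (ψ (w k)).toAdd) fun k => ?_
  have hx : ψ (x k) = Multiplicative.ofAdd 1 := (dudleySeq_spec hS k).1
  simp [hrec k, hx]

end Dudley

namespace FreeGroup

variable {ι : Type*} [DecidableEq ι]

def exponentSum (τ : ι) : FreeGroup ι →* Multiplicative ℤ :=
  FreeGroup.lift (Pi.mulSingle τ (Multiplicative.ofAdd 1))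

@[simp]
theorem exponentSum_of_self (τ : ι) : exponentSum τ (of τ) = Multiplicative.ofAdd 1 := by
  simp [exponentSum]

theorem finite_setOf_exponentSum_ne_one (g : FreeGroup ι) :
    {τ | exponentSum τ g ≠ 1}.Finite := by
  induction g with
  | C1 => simp
  | of i =>
    refine (Set.finite_singleton i).subset fun τ h => ?_
    by_contra hτ
    exact h (by simp [exponentSum, Pi.mulSingle_eq_of_ne (Ne.symm hτ)])
  | inv_of i hi => simpa using hi
  | mul x y hx hy =>
    refine (hx.union hy).subset fun τ h => ?_
    by_contra hτ
    simp_all [not_or]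

theorem exists_forall_exponentSum_eq_one {S : Set (FreeGroup ι)} (hS : #S < #ι)
    (hι : ℵ₀ < #ι) : ∃ τ, ∀ g ∈ S, exponentSum τ g = 1 := by
  have hfinite : ⨆ g : S, #{τ | exponentSum τ g.1 ≠ 1} ≤ ℵ₀ :=
    ciSup_le' fun g => (finite_setOf_exponentSum_ne_one g.1).lt_aleph0.le
  have hsupport : #(⋃ g ∈ S, {τ | exponentSum τ g ≠ 1}) < #ι :=
    (mk_biUnion_le (fun g => {τ | exponentSum τ g ≠ 1}) S).trans_lt <|
      mul_lt_of_lt hι.le hS (hfinite.trans_lt hι)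
  obtain ⟨τ, hτ⟩ : ∃ τ, τ ∉ ⋃ g ∈ S, {τ | exponentSum τ g ≠ 1} := by
    by_contra! h
    rw [Set.eq_univ_of_forall h, mk_univ] at hsupport
    exact hsupport.false
  exact ⟨τ, by simpa using hτ⟩

end FreeGroup

theorem IsFreeGroup.mk_generators_eq_of_aleph0_lt (G : Type*) [Group G] [IsFreeGroup G]
    (hG : ℵ₀ < #G) : #(Generators G) = #G := by
  have hcard : #G = #(FreeGroup (Generators G)) := mk_congr (toFreeGroup G).toEquiv
  have : Nonempty (Generators G) := by
    by_contra! h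
    have : #G ≤ 1 := hcard ▸ le_one_iff_subsingleton.2 inferInstance
    exact absurd hG (not_lt.2 (this.trans one_lt_aleph0.le))
  rw [hcard, mk_freeGroup] at hG ⊢
  exact (max_eq_left ((lt_max_iff.1 hG).resolve_right (lt_irrefl _)).le).symm

theorem MonoidHom.dense_preimage_singleton {G H : Type*} [Group G] [TopologicalSpace G]
    [ContinuousMul G] [MulOneClass H] (ψ : G →* H) (hker : Dense (ψ.ker : Set G)) (t : G) :
    Dense (ψ ⁻¹' {ψ t}) :=
  (hker.smul t).mono <| by
    rintro _ ⟨g, hg, rfl⟩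
    simp_all [MonoidHom.mem_ker]

theorem Dense.infinite_of_ne_univ {X : Type*} [TopologicalSpace X] [T1Space X] {s : Set X}
    (hs : Dense s) (hne : s ≠ Set.univ) : s.Infinite :=
  fun hfin => hne (by rw [← hs.closure_eq, hfin.isClosed.closure_eq])

/-- A complete metric group whose density (least cardinality of a dense subset)
is strictly less than its cardinality is not a free group. -/
theorem complete_metric_group_small_density_not_free
    (G : Type*) [Group G] [MetricSpace G] [CompleteSpace G] [IsTopologicalGroup G]
    (hdensity : ∃ s : Set G, Dense s ∧ Cardinal.mk s < Cardinal.mk G) :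
    ¬ IsFreeGroup G := by
  classical
  intro hfree
  obtain ⟨s, hs, hcard⟩ := hdensity
  have hs_ne : s ≠ Set.univ := by rintro rfl; exact (mk_univ (α := G) ▸ hcard).false
  have hG : ℵ₀ < #G := (infinite_iff.1 (hs.infinite_of_ne_univ hs_ne).to_subtype).trans_lt hcard
  set e := IsFreeGroup.toFreeGroup G
  have hgen := IsFreeGroup.mk_generators_eq_of_aleph0_lt G hG
  obtain ⟨τ, hτ⟩ := FreeGroup.exists_forall_exponentSum_eq_one (S := e '' s)
    (mk_image_le.trans_lt (hgen ▸ hcard)) (hgen ▸ hG)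
  set ψ := (FreeGroup.exponentSum τ).comp e.toMonoidHom
  have hker : Dense (ψ.ker : Set G) := hs.mono fun g hg => hτ _ ⟨g, hg, rfl⟩
  have hfiber := ψ.dense_preimage_singleton hker (e.symm (FreeGroup.of τ))
  have hψ : ψ (e.symm (FreeGroup.of τ)) = Multiplicative.ofAdd 1 := by simp [ψ]
  rw [hψ] at hfiber
  exact one_notMem_closure_preimage_ofAdd_one ψ (hfiber 1)
end

section
/- Let (G,d) be a complete metric group whose density is strictly less than the cardinality of G, and assume G is ℵ₁-free, i.e. every countable subgroup of G is a free group. Then there is a countable subset A of G such that no countable subgroup of G containing A is a retract of G. -/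
/-!
If `h` retracts `G` onto a free subgroup `H`, then `h` kills a neighbourhood of `1`: otherwise one
can choose `z n → 1` with `h (z n) ≠ 1` and exponents `k n` growing so fast that the nested
products `y n = z n * y (n + 1) ^ k n` converge in the complete group `G`. Applying `h` gives such
a recursion in a free group, which is impossible: `w ≠ 1` forces `k ≤ ‖w ^ k‖`, whereas the
recursion keeps `‖h (y n)‖` additively bounded. Hence `h` is continuous, so its fixed set `H` is
closed and contains the closure of `A`. Density `< |G|` makes `G` non-discrete, hence perfect, and
a Cantor set in `G` yields a countable `A` with uncountable closure.
-/

open Filter Topology Finset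

namespace FreeGroup

open reduceCyclically

variable {α : Type*} [DecidableEq α]

theorem norm_pow (x : FreeGroup α) {n : ℕ} (hn : n ≠ 0) :
    (x ^ n).norm =
      2 * (conjugator x.toWord).length + n * (reduceCyclically x.toWord).length := by
  simp [norm, toWord_pow, reduce_flatten_replicate isReduced_toWord, hn, invRev]
  ring

theorem norm_le_norm_pow (x : FreeGroup α) {n : ℕ} (hn : n ≠ 0) : x.norm ≤ (x ^ n).norm := by
  have h1 := norm_pow x one_ne_zero
  rw [pow_one] at h1
  rw [h1, norm_pow x hn]
  gcongr
  omega

theorem le_norm_pow {x : FreeGroup α} (hx : x ≠ 1) (n : ℕ) : n ≤ (x ^ n).norm := by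
  rcases eq_or_ne n 0 with rfl | hn
  · exact Nat.zero_le _
  have hcyc : reduceCyclically x.toWord ≠ [] := by
    intro h
    -- then `x ^ 2` and `x` have the same reduced word
    apply hx
    have h2 : (x ^ 2).toWord = x.toWord := by
      rw [toWord_pow, reduce_flatten_replicate isReduced_toWord]
      simpa [h] using conj_conjugator_reduceCyclically x.toWord
    simpa [pow_two] using toWord_injective h2
  rw [norm_pow x hn]
  have := List.length_pos_iff.2 hcyc
  nlinarith

theorem no_infinite_nested_powers (v w : ℕ → FreeGroup α) (k : ℕ → ℕ) (hv : ∀ n, v n ≠ 1)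
    (hk : ∀ n, n + ∑ j ∈ range (n + 1), (v j).norm < k n)
    (hw : ∀ n, w n = v n * w (n + 1) ^ k n) : False := by
  have hstep n : (w (n + 1) ^ k n).norm ≤ (v n).norm + (w n).norm := by
    have : w (n + 1) ^ k n = (v n)⁻¹ * w n := by rw [hw n]; group
    rw [this, ← norm_inv_eq (x := v n)]
    exact norm_mul_le _ _
  have upper n : (w n).norm ≤ (w 0).norm + ∑ j ∈ range n, (v j).norm := by
    induction n with
    | zero => simp
    | succ n ih =>
      have := norm_le_norm_pow (w (n + 1)) (n := k n) (by have := hk n; omega)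
      rw [sum_range_succ]
      linarith [hstep n]
  have lower n (hn : w (n + 1) ≠ 1) : n < (w 0).norm := by
    have hpow := le_norm_pow hn (k n)
    have hkn := hk n
    rw [sum_range_succ] at hkn
    linarith [hstep n, upper n]
  have alternate n (hn : w n = 1) : w (n + 1) ≠ 1 := fun hn' ↦
    hv n (by simpa [hn, hn'] using (hw n).symm)
  by_cases h : w ((w 0).norm + 1) = 1
  · have := lower _ (alternate _ h)
    omega
  · have := lower _ h
    omega

end FreeGroup

theorem Filter.Frequently.exists_forall_dist_lt {X Y : Type*} [TopologicalSpace X]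
    [PseudoMetricSpace Y] {x : X} {P : X → Prop} (hP : ∃ᶠ u in 𝓝 x, P u) (g : ℕ → C(X, Y))
    (m : ℕ) {ε : ℝ} (hε : 0 < ε) : ∃ u, P u ∧ ∀ n ≤ m, dist (g n x) (g n u) < ε := by
  have hnear : ∀ᶠ u in 𝓝 x, ∀ n ∈ {n | n ≤ m}, dist (g n x) (g n u) < ε :=
    (Set.finite_le_nat m).eventually_all.2 fun n _ ↦
      ((g n).continuous.tendsto x).eventually (Metric.ball_mem_nhds (g n x) hε) |>.mono
        fun u hu ↦ by rwa [dist_comm]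
  exact (hP.and_eventually hnear).exists

theorem exists_eq_mul_pow_of_dist_le {M : Type*} [Monoid M] [MetricSpace M] [CompleteSpace M]
    [ContinuousMul M] (z : ℕ → M) (k : ℕ → ℕ) (D : ℕ → ℕ → M)
    (hD : ∀ n d, D n (d + 1) = z n * D (n + 1) d ^ k n)
    (hC : ∀ n d, dist (D n d) (D n (d + 1)) ≤ (1 / 2) ^ d) :
    ∃ y : ℕ → M, ∀ n, y n = z n * y (n + 1) ^ k n := by
  have hlim n : ∃ y, Tendsto (D n) atTop (𝓝 y) :=
    cauchySeq_tendsto_of_complete <|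
      cauchySeq_of_le_geometric (1 / 2) 1 (by norm_num) fun d ↦ by simpa using hC n d
  choose y hy using hlim
  refine ⟨y, fun n ↦ tendsto_nhds_unique ((hy n).comp (tendsto_add_atTop_nat 1)) ?_⟩
  simp only [Function.comp_def, hD]
  exact ((hy (n + 1)).pow (k n)).const_mul (z n)

namespace NestedProducts

structure Stage (M : Type*) [TopologicalSpace M] where
  weight : ℕ
  maps : ℕ → C(M, M)

variable {M : Type*} [Monoid M] [TopologicalSpace M] [ContinuousMul M]

def powMul (u : M) (e : ℕ) : C(M, M) := ⟨fun t ↦ u * t ^ e, by fun_prop⟩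

variable (c : M → ℕ) (pick : ℕ → (ℕ → C(M, M)) → M)

/-- Once the letters `z j` and exponents `k j` are fixed for `j < m`, the maps of stage `m` are
`t ↦ z n * (z (n + 1) * (⋯ (z (m - 1) * t ^ k (m - 1)) ⋯) ^ k (n + 1)) ^ k n` for `n ≤ m`,
and its weight is `m + ∑ j < m, c (z j)`. -/
def stage : ℕ → Stage M
  | 0 => ⟨0, fun _ ↦ .id M⟩
  | m + 1 =>
    let u := pick m (stage m).maps
    let e := (stage m).weight + c u + 1
    ⟨e, fun n ↦ if n ≤ m then ((stage m).maps n).comp (powMul u e) else .id M⟩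

def letter (m : ℕ) : M := pick m (stage c pick m).maps

def exponent (m : ℕ) : ℕ := (stage c pick (m + 1)).weight

theorem stage_maps_self (m : ℕ) : (stage c pick m).maps m = .id M := by
  cases m with
  | zero => rfl
  | succ m => simp [stage]

theorem stage_maps_succ {n m : ℕ} (h : n ≤ m) :
    (stage c pick (m + 1)).maps n =
      ((stage c pick m).maps n).comp (powMul (letter c pick m) (exponent c pick m)) := by
  simp [stage, letter, exponent, h]

theorem stage_maps_of_lt {n m : ℕ} (h : n < m) :
    (stage c pick m).maps n =
      (powMul (letter c pick n) (exponent c pick n)).comp ((stage c pick m).maps (n + 1)) := by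
  induction m with
  | zero => omega
  | succ m ih =>
    rw [stage_maps_succ c pick (by omega : n ≤ m)]
    rcases (Nat.lt_succ_iff.1 h).lt_or_eq with h | rfl
    · rw [ih h, ContinuousMap.comp_assoc, stage_maps_succ c pick (by omega : n + 1 ≤ m)]
    · rw [stage_maps_self, stage_maps_self]
      rfl

theorem stage_weight (m : ℕ) :
    (stage c pick m).weight = m + ∑ j ∈ range m, c (letter c pick j) := by
  induction m with
  | zero => rfl
  | succ m ih =>
    simp only [stage, sum_range_succ, ih, letter]
    ring

theorem lt_exponent (n : ℕ) :
    n + ∑ j ∈ range (n + 1), c (letter c pick j) < exponent c pick n := by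
  rw [exponent, stage_weight]
  omega

end NestedProducts

open NestedProducts in
theorem exists_nested_products {M : Type*} [Monoid M] [MetricSpace M] [CompleteSpace M]
    [ContinuousMul M] {P : M → Prop} (hP : ∃ᶠ u in 𝓝 1, P u) (c : M → ℕ) :
    ∃ (z y : ℕ → M) (k : ℕ → ℕ), (∀ n, P (z n)) ∧
      (∀ n, n + ∑ j ∈ range (n + 1), c (z j) < k n) ∧ ∀ n, y n = z n * y (n + 1) ^ k n := by
  choose pick hpick using fun m (g : ℕ → C(M, M)) ↦
    hP.exists_forall_dist_lt g m (ε := (1 / 2) ^ m) (by positivity)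
  -- `(stage c pick (n + d)).maps n 1` is the nested product from `z n` cut off after `d` letters
  obtain ⟨y, hy⟩ := exists_eq_mul_pow_of_dist_le (letter c pick) (exponent c pick)
    (fun n d ↦ (stage c pick (n + d)).maps n 1)
    (fun n d ↦ by
      rw [← Nat.add_assoc, stage_maps_of_lt c pick (by omega), Nat.add_right_comm]
      rfl)
    (fun n d ↦ by
      rw [← Nat.add_assoc, stage_maps_succ c pick (by omega : n ≤ n + d)]
      calc _ ≤ (1 / 2 : ℝ) ^ (n + d) := by
            simpa [powMul, letter] using ((hpick _ _).2 n (by omega)).le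
        _ ≤ (1 / 2) ^ d := pow_le_pow_of_le_one (by norm_num) (by norm_num) (by omega))
  exact ⟨letter c pick, y, exponent c pick, fun n ↦ (hpick _ _).1, lt_exponent c pick, hy⟩

theorem MonoidHom.eventually_eq_one_of_freeGroup {M β : Type*} [Monoid M] [MetricSpace M]
    [CompleteSpace M] [ContinuousMul M] (φ : M →* FreeGroup β) : ∀ᶠ u in 𝓝 1, φ u = 1 := by
  classical
  by_contra hφ
  obtain ⟨z, y, k, hz, hk, hy⟩ :=
    exists_nested_products (not_eventually.1 hφ) fun u ↦ (φ u).norm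
  exact FreeGroup.no_infinite_nested_powers (φ ∘ z) (φ ∘ y) k hz hk
    fun n ↦ by simp [hy n]

theorem MonoidHom.continuous_of_forall_mem_of_isFreeGroup {G M : Type*} [Group G] [MetricSpace G]
    [CompleteSpace G] [IsTopologicalGroup G] [Group M] [TopologicalSpace M] [ContinuousMul M]
    (f : G →* M) (H : Subgroup M) [IsFreeGroup H] (hf : ∀ x, f x ∈ H) : Continuous f := by
  have hφ := MonoidHom.eventually_eq_one_of_freeGroup
    ((IsFreeGroup.toFreeGroup H).toMonoidHom.comp (f.codRestrict H hf))
  refine continuous_of_continuousAt_one f (Filter.EventuallyEq.continuousAt (y := 1) ?_)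
  filter_upwards [hφ] with x hx
  simpa using hx

theorem perfectSpace_of_exists_dense_lt_mk {G : Type*} [Group G] [TopologicalSpace G]
    [IsTopologicalGroup G] (h : ∃ s : Set G, Dense s ∧ Cardinal.mk s < Cardinal.mk G) :
    PerfectSpace G := by
  refine perfectSpace_iff_forall_not_isolated.2 fun x ↦ ⟨fun hx ↦ ?_⟩
  have : DiscreteTopology G :=
    (MulAction.IsPretransitive.discreteTopology_iff G x).2
      ((isOpen_singleton_iff_punctured_nhds x).2 hx)
  obtain ⟨s, hs, hlt⟩ := h
  rw [dense_discrete.1 hs, Cardinal.mk_univ] at hlt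
  exact hlt.false

theorem exists_countable_not_countable_closure (X : Type*) [MetricSpace X] [CompleteSpace X]
    [PerfectSpace X] [Nonempty X] : ∃ A : Set X, A.Countable ∧ ¬ (closure A).Countable := by
  obtain ⟨f, -, hf, hinj⟩ :=
    (PerfectSpace.univ_perfect (α := X)).exists_nat_bool_injection Set.univ_nonempty
  obtain ⟨A, -, hA, hcl⟩ := EMetric.countable_closure_of_compact (isCompact_range hf)
  refine ⟨A, hA, fun hcount ↦ ?_⟩
  have : Uncountable (ℕ → Bool) :=
    Cardinal.aleph0_lt_mk_iff.1 (by simpa using Cardinal.aleph0_lt_continuum)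
  rw [← hcl] at hcount
  exact Set.not_countable_univ (by simpa using hcount.preimage hinj)

/-- If `(G,d)` is a complete metric group of density strictly less than `|G|` which is
`ℵ₁`-free (every countable subgroup is free), then there is a countable subset `A ⊆ G`
such that no countable subgroup of `G` containing `A` is a retract of `G`. -/
theorem complete_metric_group_no_countable_retract
    (G : Type*) [Group G] [MetricSpace G] [CompleteSpace G] [IsTopologicalGroup G]
    (hdensity : ∃ s : Set G, Dense s ∧ Cardinal.mk s < Cardinal.mk G)
    (haleph1free : ∀ H : Subgroup G, Countable H → IsFreeGroup H) :
    ∃ A : Set G, A.Countable ∧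
      ∀ H : Subgroup G, Countable H → A ⊆ (H : Set G) →
        ¬ ∃ h : G →* G, (∀ x : G, h x ∈ H) ∧ (∀ x ∈ H, h x = x) := by
  have := perfectSpace_of_exists_dense_lt_mk hdensity
  obtain ⟨A, hA, hAcl⟩ := exists_countable_not_countable_closure G
  refine ⟨A, hA, fun H hH hAH ⟨h, hmem, hfix⟩ ↦ hAcl ?_⟩
  have := haleph1free H hH
  have hcont := h.continuous_of_forall_mem_of_isFreeGroup H hmem
  have hclosure : closure A ⊆ H :=
    calc closure A ⊆ {x | h x = x} :=
          closure_minimal (fun a ha ↦ hfix a (hAH ha)) (isClosed_eq hcont continuous_id)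
      _ ⊆ H := fun x hx ↦ hx ▸ hmem x
  exact (Set.countable_coe_iff.1 hH).mono hclosure
end
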